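/- arXiv:math/0508306 — 2 statements merged into one kernel-verified Lean document; each statement's English description precedes it below -/
import Mathlib

section
/- The 2k-th moment of the semicircle distribution of (0, 2) equals the k-th Catalan number: (1/(2π)) ∫_{-2}^{2} t^{2k} √(4 - t²) dt = C_k = (1/(k+1)) · binom(2k, k). -/
/-!
Substituting `t = -2 cos θ` turns the moment into `(4 ^ (k + 1) / 2π) ∫₀^π cos^(2k) θ sin² θ dθ`.
Writing `sin² = 1 - cos²`, the reduction formula for `∫₀^π cos^n` gives
`∫₀^π cos^n sin² = (∫₀^π cos^n) / (n + 2)`, and Wallis' formula `∫₀^π cos^(2k) = π binom(2k, k) / 4^k`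
leaves `binom(2k, k) / (k + 1) = C_k`.
-/

open Real intervalIntegral

theorem cast_catalan_eq_centralBinom_div {K : Type*} [Field K] [CharZero K] (n : ℕ) :
    (catalan n : K) = n.centralBinom / (n + 1) := by
  rw [eq_div_iff (Nat.cast_add_one_ne_zero n), mul_comm]
  exact_mod_cast succ_mul_catalan_eq_centralBinom n

theorem integral_mul_sqrt_sq_sub_sq {r : ℝ} (hr : 0 ≤ r) {f : ℝ → ℝ} (hf : Continuous f) :
    ∫ t in -r..r, f t * √(r ^ 2 - t ^ 2) = r ^ 2 * ∫ θ in 0..π, f (-(r * cos θ)) * sin θ ^ 2 := by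
  have hderiv : ∀ θ ∈ Set.uIcc 0 π, HasDerivAt (fun θ => -(r * cos θ)) (r * sin θ) θ := fun θ _ =>
    ((hasDerivAt_cos θ).const_mul r).neg.congr_deriv (by ring)
  have hsubst := integral_comp_mul_deriv (g := fun t => f t * √(r ^ 2 - t ^ 2)) hderiv
    (by fun_prop : Continuous fun θ => r * sin θ).continuousOn (by fun_prop)
  simp only [cos_zero, cos_pi, mul_one, mul_neg, neg_neg] at hsubst
  rw [← hsubst, ← integral_const_mul]
  refine integral_congr fun θ hθ => ?_
  rw [Set.uIcc_of_le pi_pos.le] at hθ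
  have hsqrt : √(r ^ 2 - (-(r * cos θ)) ^ 2) = r * sin θ := by
    rw [← sqrt_sq (mul_nonneg hr (sin_nonneg_of_mem_Icc hθ)), mul_pow, sin_sq]
    ring_nf
  simp only [Function.comp_apply, hsqrt]
  ring

theorem integral_cos_pow_mul_sin_sq (n : ℕ) :
    ∫ θ in 0..π, cos θ ^ n * sin θ ^ 2 = (∫ θ in 0..π, cos θ ^ n) / (n + 2) := by
  have hint (m : ℕ) : IntervalIntegrable (fun θ => cos θ ^ m) MeasureTheory.volume 0 π :=
    (continuous_cos.pow m).intervalIntegrable 0 π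
  calc ∫ θ in 0..π, cos θ ^ n * sin θ ^ 2
      = ∫ θ in 0..π, cos θ ^ n - cos θ ^ (n + 2) :=
        integral_congr fun θ _ => by simp only [sin_sq]; ring
    _ = (∫ θ in 0..π, cos θ ^ n) - ∫ θ in 0..π, cos θ ^ (n + 2) := integral_sub (hint n) (hint _)
    _ = (∫ θ in 0..π, cos θ ^ n) / (n + 2) := by
        rw [integral_cos_pow]
        simp only [sin_zero, sin_pi, mul_zero, sub_zero, zero_div, zero_add]
        field_simp
        ring

theorem integral_cos_pow_two_mul (m : ℕ) :
    ∫ θ in 0..π, cos θ ^ (2 * m) = π * m.centralBinom / 4 ^ m := by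
  induction m with
  | zero => simp
  | succ j ih =>
    have hrec : ((j + 1).centralBinom : ℝ) = 2 * (2 * j + 1) / (j + 1) * j.centralBinom := by
      rw [div_mul_eq_mul_div, eq_div_iff (Nat.cast_add_one_ne_zero j), mul_comm]
      exact_mod_cast Nat.succ_mul_centralBinom_succ j
    rw [Nat.mul_succ, integral_cos_pow, ih, hrec]
    simp only [sin_zero, sin_pi, mul_zero, sub_zero, zero_div, zero_add]
    field_simp
    push_cast
    ring

theorem semicircle_even_moments_catalan (k : ℕ) :
    (1 / (2 * Real.pi)) * ∫ t in (-2 : ℝ)..2, t ^ (2 * k) * Real.sqrt (4 - t ^ 2)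
      = (catalan k : ℝ) ∧
    (catalan k : ℝ) = (1 / (k + 1 : ℝ)) * (Nat.choose (2 * k) k : ℝ) := by
  refine ⟨?_, by rw [cast_catalan_eq_centralBinom_div, Nat.centralBinom_eq_two_mul_choose]; ring⟩
  have hsubst := integral_mul_sqrt_sq_sub_sq zero_le_two (continuous_pow (M := ℝ) (2 * k))
  have hpow (θ : ℝ) : (-(2 * cos θ)) ^ (2 * k) = 4 ^ k * cos θ ^ (2 * k) := by
    rw [pow_mul, pow_mul, neg_sq, mul_pow, mul_pow]
    norm_num
  norm_num only [hpow, mul_assoc, integral_const_mul] at hsubst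
  rw [hsubst, integral_cos_pow_mul_sin_sq, integral_cos_pow_two_mul,
    cast_catalan_eq_centralBinom_div]
  field_simp
  push_cast
  ring
end

section
/- Let r > 0 with r ≤ 2/π². Then ∫_0^1 |f'(s)|² ds ≤ 5r, where f is the endpoint-smoothed inverse CDF of the semicircle law of (0,r): f(s) = (g(r)/r²)s² on [0,r], f = g on [r, 1-r], f(s) = (g(1-r)/r²)(1-s)² on [1-r, 1]. -/
/-!
On a quadratic cap `|f'| = 2 |y| u / r²`, where `u` is the distance to the outer endpoint and
`y = g(r)` or `g(1-r)` satisfies `|y| ≤ r`, so each cap contributes `4y²/(3r) ≤ 4r/3`.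
In the middle `f = g` is the inverse of the semicircle CDF, whose derivative is the density `ρ`;
hence `f' = 1/ρ(g)`, and `|f'|² = 1/ρ(g)²` is the derivative of `(πr²/2) arcsin(g/r)`, so the middle
contributes at most `π²r²/2 ≤ r`.
-/

open Set MeasureTheory Filter Topology Real

theorem IntervalIntegrable.of_eqOn_Ioo {φ ψ : ℝ → ℝ} {a b : ℝ} (hab : a ≤ b)
    (hψ : ContinuousOn ψ (Icc a b)) (h : EqOn φ ψ (Ioo a b)) :
    IntervalIntegrable φ volume a b := by
  rw [intervalIntegrable_iff_integrableOn_Ioc_of_le hab, integrableOn_Ioc_iff_integrableOn_Ioo]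
  exact (hψ.integrableOn_Icc.mono_set Ioo_subset_Icc_self).congr_fun h.symm measurableSet_Ioo

theorem intervalIntegral.integral_congr_Ioo {φ ψ : ℝ → ℝ} {a b : ℝ} (hab : a ≤ b)
    (h : EqOn φ ψ (Ioo a b)) : ∫ s in a..b, φ s = ∫ s in a..b, ψ s := by
  simp only [intervalIntegral.integral_of_le hab, integral_Ioc_eq_integral_Ioo]
  exact setIntegral_congr_fun measurableSet_Ioo h

theorem sq_abs_deriv_eqOn_of_eqOn {f F f' F' : ℝ → ℝ} {a b : ℝ} (hfF : EqOn f F (Ioo a b))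
    (hf : ∀ s ∈ Ioo a b, HasDerivAt f (f' s) s) (hF : ∀ s ∈ Ioo a b, HasDerivAt F (F' s) s) :
    EqOn (fun s => |f' s| ^ 2) (fun s => F' s ^ 2) (Ioo a b) := fun s hs => by
  dsimp only
  rw [sq_abs, (hf s hs).unique <| (hF s hs).congr_of_eventuallyEq <|
    eventually_of_mem (Ioo_mem_nhds hs.1 hs.2) hfF]

theorem Set.LeftInvOn.strictMonoOn {α β : Type*} [Preorder α] [LinearOrder β] {C : β → α}
    {g : α → β} {S : Set α} (h : LeftInvOn C g S) (hC : Monotone C) : StrictMonoOn g S := by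
  intro a ha b hb hab
  by_contra! hba
  have := hC hba
  rw [h ha, h hb] at this
  exact hab.not_ge this

theorem hasDerivAt_mul_sub_sq (c p s : ℝ) :
    HasDerivAt (fun s => c * (s - p) ^ 2) (2 * c * (s - p)) s := by
  simpa [mul_comm, mul_left_comm, mul_assoc] using
    (((hasDerivAt_id s).sub_const p).pow 2).const_mul c

theorem integral_two_mul_mul_sub_sq (a b c p : ℝ) :
    ∫ s in a..b, (2 * c * (s - p)) ^ 2 = 4 * c ^ 2 * ((b - p) ^ 3 - (a - p) ^ 3) / 3 := by
  have : (fun s => (2 * c * (s - p)) ^ 2) = fun s => 4 * c ^ 2 * (s - p) ^ 2 := by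
    funext s; ring
  rw [this, intervalIntegral.integral_const_mul,
    intervalIntegral.integral_comp_sub_right (fun s => s ^ 2), integral_pow]
  ring

section QuadraticCap

variable {f f' : ℝ → ℝ} {a b c p : ℝ} (hf : EqOn f (fun s => c * (s - p) ^ 2) (Ioo a b))
  (hderiv : ∀ s ∈ Ioo a b, HasDerivAt f (f' s) s)
include hf hderiv

theorem intervalIntegrable_sq_abs_deriv_of_eqOn_mul_sub_sq (hab : a ≤ b) :
    IntervalIntegrable (fun s => |f' s| ^ 2) volume a b :=
  .of_eqOn_Ioo hab (by fun_prop) <|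
    sq_abs_deriv_eqOn_of_eqOn hf hderiv fun s _ => hasDerivAt_mul_sub_sq c p s

theorem integral_sq_abs_deriv_of_eqOn_mul_sub_sq (hab : a ≤ b) :
    ∫ s in a..b, |f' s| ^ 2 = 4 * c ^ 2 * ((b - p) ^ 3 - (a - p) ^ 3) / 3 := by
  rw [intervalIntegral.integral_congr_Ioo hab <|
    sq_abs_deriv_eqOn_of_eqOn hf hderiv fun s _ => hasDerivAt_mul_sub_sq c p s,
    integral_two_mul_mul_sub_sq]

end QuadraticCap

theorem div_sq_sq_mul_pow_three_le {r y : ℝ} (hr : 0 < r) (hy : |y| ≤ r) :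
    (y / r ^ 2) ^ 2 * r ^ 3 ≤ r := by
  have : y ^ 2 ≤ r ^ 2 := sq_le_sq' (abs_le.1 hy).1 (abs_le.1 hy).2
  calc (y / r ^ 2) ^ 2 * r ^ 3 = y ^ 2 / r := by field_simp
    _ ≤ r := by rw [div_le_iff₀ hr]; nlinarith

noncomputable def semicircleDensity (r t : ℝ) : ℝ := 2 / (π * r ^ 2) * √(r ^ 2 - t ^ 2)

noncomputable def semicircleCDF (r t : ℝ) : ℝ := ∫ t₁ in (-r)..t, semicircleDensity r t₁

section Semicircle

variable {r : ℝ}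

theorem continuous_semicircleDensity : Continuous (semicircleDensity r) := by
  unfold semicircleDensity; fun_prop

theorem semicircleDensity_nonneg (t : ℝ) : 0 ≤ semicircleDensity r t := by
  unfold semicircleDensity; positivity

theorem semicircleDensity_pos {t : ℝ} (ht : t ∈ Ioo (-r) r) : 0 < semicircleDensity r t := by
  have hr : 0 < r := by linarith [ht.1, ht.2]
  unfold semicircleDensity
  exact mul_pos (by positivity) (sqrt_pos.2 (by nlinarith [ht.1, ht.2]))

theorem hasDerivAt_semicircleCDF (t : ℝ) :
    HasDerivAt (semicircleCDF r) (semicircleDensity r t) t :=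
  intervalIntegral.integral_hasDerivAt_right (continuous_semicircleDensity.intervalIntegrable _ _)
    (continuous_semicircleDensity.stronglyMeasurableAtFilter _ _)
    continuous_semicircleDensity.continuousAt

theorem monotone_semicircleCDF : Monotone (semicircleCDF r) :=
  monotone_of_hasDerivAt_nonneg hasDerivAt_semicircleCDF semicircleDensity_nonneg

theorem semicircleCDF_neg_self : semicircleCDF r (-r) = 0 := intervalIntegral.integral_same

theorem integral_sqrt_sq_sub_sq (hr : 0 ≤ r) :
    ∫ t in (-r)..r, √(r ^ 2 - t ^ 2) = π * r ^ 2 / 2 := by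
  have hscale : ∀ x, √(r ^ 2 - (r * x) ^ 2) = r * √(1 - x ^ 2) := fun x => by
    rw [show r ^ 2 - (r * x) ^ 2 = r ^ 2 * (1 - x ^ 2) by ring, sqrt_mul (sq_nonneg r), sqrt_sq hr]
  have := intervalIntegral.smul_integral_comp_mul_left (f := fun t => √(r ^ 2 - t ^ 2))
    (a := -1) (b := 1) r
  simp only [hscale, intervalIntegral.integral_const_mul, integral_sqrt_one_sub_sq, mul_neg,
    mul_one, smul_eq_mul] at this
  rw [← this]; ring

theorem semicircleCDF_self (hr : 0 < r) : semicircleCDF r r = 1 := by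
  unfold semicircleCDF semicircleDensity
  rw [intervalIntegral.integral_const_mul, integral_sqrt_sq_sub_sq hr.le]
  field_simp

theorem mem_Ioo_of_semicircleCDF_eq (hr : 0 < r) {s t : ℝ} (hs : s ∈ Ioo 0 1)
    (ht : semicircleCDF r t = s) : t ∈ Ioo (-r) r := by
  constructor
  · by_contra! h
    have := monotone_semicircleCDF (r := r) h
    rw [ht, semicircleCDF_neg_self] at this
    exact this.not_gt hs.1
  · by_contra! h
    have := monotone_semicircleCDF (r := r) h
    rw [ht, semicircleCDF_self hr] at this
    exact this.not_gt hs.2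

theorem hasDerivAt_mul_arcsin_div {t : ℝ} (ht : t ∈ Ioo (-r) r) :
    HasDerivAt (fun t => π * r ^ 2 / 2 * arcsin (t / r)) (semicircleDensity r t)⁻¹ t := by
  have hr : 0 < r := by linarith [ht.1, ht.2]
  have hlt : |t / r| < 1 := by rw [abs_div, abs_of_pos hr, div_lt_one hr, abs_lt]; exact ht
  have hsqrt : √(1 - (t / r) ^ 2) = √(r ^ 2 - t ^ 2) / r := by
    rw [show 1 - (t / r) ^ 2 = (r ^ 2 - t ^ 2) / r ^ 2 by field_simp, sqrt_div' _ (sq_nonneg r),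
      sqrt_sq hr.le]
  refine (((hasDerivAt_arcsin (abs_lt.1 hlt).1.ne' (abs_lt.1 hlt).2.ne).comp t
    ((hasDerivAt_id t).div_const r)).const_mul (π * r ^ 2 / 2)).congr_deriv ?_
  rw [hsqrt, semicircleDensity]
  field_simp

section InverseCDF

variable {g : ℝ → ℝ} (hr : 0 < r) (hright : LeftInvOn (semicircleCDF r) g (Icc 0 1))
include hr hright

theorem mapsTo_Ioo_of_leftInvOn_semicircleCDF : MapsTo g (Ioo 0 1) (Ioo (-r) r) :=
  fun _ hs => mem_Ioo_of_semicircleCDF_eq hr hs (hright (Ioo_subset_Icc_self hs))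

variable (hleft : LeftInvOn g (semicircleCDF r) (Icc (-r) r))
include hleft

theorem continuousAt_of_leftInvOn_semicircleCDF {s : ℝ} (hs : s ∈ Ioo 0 1) :
    ContinuousAt g s := by
  have hgs := mapsTo_Ioo_of_leftInvOn_semicircleCDF hr hright hs
  refine (hright.strictMonoOn monotone_semicircleCDF).continuousAt_of_image_mem_nhds
    (Icc_mem_nhds hs.1 hs.2) (mem_of_superset (Icc_mem_nhds hgs.1 hgs.2) fun t ht => ?_)
  refine ⟨semicircleCDF r t, ⟨?_, ?_⟩, hleft ht⟩
  · simpa [semicircleCDF_neg_self] using monotone_semicircleCDF (r := r) ht.1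
  · simpa [semicircleCDF_self hr] using monotone_semicircleCDF (r := r) ht.2

theorem hasDerivAt_of_leftInvOn_semicircleCDF {s : ℝ} (hs : s ∈ Ioo 0 1) :
    HasDerivAt g (semicircleDensity r (g s))⁻¹ s :=
  .of_local_left_inverse (continuousAt_of_leftInvOn_semicircleCDF hr hright hleft hs)
    (hasDerivAt_semicircleCDF (g s))
    (semicircleDensity_pos (mapsTo_Ioo_of_leftInvOn_semicircleCDF hr hright hs)).ne'
    (eventually_of_mem (Ioo_mem_nhds hs.1 hs.2) fun _ hy => hright (Ioo_subset_Icc_self hy))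

theorem continuousOn_inv_semicircleDensity_comp {a b : ℝ} (hab : Icc a b ⊆ Ioo 0 1) :
    ContinuousOn (fun s => (semicircleDensity r (g s))⁻¹ ^ 2) (Icc a b) := fun _ hs =>
  ((continuous_semicircleDensity.continuousAt.comp
    (continuousAt_of_leftInvOn_semicircleCDF hr hright hleft (hab hs))).inv₀
    (semicircleDensity_pos (mapsTo_Ioo_of_leftInvOn_semicircleCDF hr hright (hab hs))).ne'
    |>.pow 2).continuousWithinAt

theorem integral_inv_semicircleDensity_comp_sq_le {a b : ℝ} (hab : a ≤ b)
    (hab' : Icc a b ⊆ Ioo 0 1) :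
    ∫ s in a..b, (semicircleDensity r (g s))⁻¹ ^ 2 ≤ π ^ 2 * r ^ 2 / 2 := by
  set Φ : ℝ → ℝ := fun t => π * r ^ 2 / 2 * arcsin (t / r)
  have hderiv : ∀ s ∈ Ioo a b, HasDerivAt (Φ ∘ g) ((semicircleDensity r (g s))⁻¹ ^ 2) s := by
    intro s hs
    have hs' := hab' (Ioo_subset_Icc_self hs)
    refine ((hasDerivAt_mul_arcsin_div (mapsTo_Ioo_of_leftInvOn_semicircleCDF hr hright hs')).comp
      s (hasDerivAt_of_leftInvOn_semicircleCDF hr hright hleft hs')).congr_deriv (sq _).symm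
  have hcont : ContinuousOn (Φ ∘ g) (Icc a b) := fun s hs =>
    (by fun_prop : Continuous Φ).continuousAt.comp
      (continuousAt_of_leftInvOn_semicircleCDF hr hright hleft (hab' hs)) |>.continuousWithinAt
  rw [intervalIntegral.integral_eq_sub_of_hasDerivAt_of_le hab hcont hderiv
    ((continuousOn_inv_semicircleDensity_comp hr hright hleft hab').intervalIntegrable_of_Icc hab)]
  have harcsin : arcsin (g b / r) - arcsin (g a / r) ≤ π := by
    linarith [arcsin_le_pi_div_two (g b / r), neg_pi_div_two_le_arcsin (g a / r)]
  calc Φ (g b) - Φ (g a) = π * r ^ 2 / 2 * (arcsin (g b / r) - arcsin (g a / r)) := by ring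
    _ ≤ π * r ^ 2 / 2 * π := by gcongr
    _ = π ^ 2 * r ^ 2 / 2 := by ring

variable {f f' : ℝ → ℝ} {a b : ℝ} (hsub : Icc a b ⊆ Ioo 0 1)
  (hf : EqOn f g (Ioo a b)) (hderiv : ∀ s ∈ Ioo a b, HasDerivAt f (f' s) s)
include hsub hf hderiv

theorem sq_abs_deriv_eqOn_of_eqOn_inv_semicircleCDF :
    EqOn (fun s => |f' s| ^ 2) (fun s => (semicircleDensity r (g s))⁻¹ ^ 2) (Ioo a b) :=
  sq_abs_deriv_eqOn_of_eqOn hf hderiv fun _ hs =>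
    hasDerivAt_of_leftInvOn_semicircleCDF hr hright hleft (hsub (Ioo_subset_Icc_self hs))

theorem intervalIntegrable_sq_abs_deriv_of_eqOn_inv_semicircleCDF (hab : a ≤ b) :
    IntervalIntegrable (fun s => |f' s| ^ 2) volume a b :=
  .of_eqOn_Ioo hab (continuousOn_inv_semicircleDensity_comp hr hright hleft hsub)
    (sq_abs_deriv_eqOn_of_eqOn_inv_semicircleCDF hr hright hleft hsub hf hderiv)

theorem integral_sq_abs_deriv_le_of_eqOn_inv_semicircleCDF (hab : a ≤ b) :
    ∫ s in a..b, |f' s| ^ 2 ≤ π ^ 2 * r ^ 2 / 2 := by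
  rw [intervalIntegral.integral_congr_Ioo hab
    (sq_abs_deriv_eqOn_of_eqOn_inv_semicircleCDF hr hright hleft hsub hf hderiv)]
  exact integral_inv_semicircleDensity_comp_sq_le hr hright hleft hab hsub

end InverseCDF

end Semicircle

theorem perturbation_energy_bound_general (r : ℝ) (hr : 0 < r) (hr' : r ≤ 2 / Real.pi ^ 2)
    (g : ℝ → ℝ)
    (hg_right : ∀ s ∈ Set.Icc (0 : ℝ) 1,
      (∫ t₁ in (-r)..(g s), (2 / (Real.pi * r ^ 2)) * Real.sqrt (r ^ 2 - t₁ ^ 2)) = s)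
    (hg_left : ∀ t ∈ Set.Icc (-r) r,
      g (∫ t₁ in (-r)..t, (2 / (Real.pi * r ^ 2)) * Real.sqrt (r ^ 2 - t₁ ^ 2)) = t)
    (f f' : ℝ → ℝ)
    (hf1 : ∀ s ∈ Set.Icc (0 : ℝ) r, f s = (g r / r ^ 2) * s ^ 2)
    (hf2 : ∀ s ∈ Set.Ioc r (1 - r), f s = g s)
    (hf3 : ∀ s ∈ Set.Icc (1 - r) 1, f s = (g (1 - r) / r ^ 2) * (1 - s) ^ 2)
    (hderiv : ∀ s ∈ Set.Icc (0 : ℝ) 1 \ {r, 1 - r}, HasDerivAt f (f' s) s) :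
    (∫ s in (0 : ℝ)..1, |f' s| ^ 2) ≤ 5 * r := by
  have hπr : π ^ 2 * r ≤ 2 := by rwa [le_div_iff₀ (by positivity), mul_comm] at hr'
  have hrr : r ≤ 1 - r := by nlinarith [pi_gt_three]
  have hright : LeftInvOn (semicircleCDF r) g (Icc 0 1) := fun s hs => hg_right s hs
  have hleft : LeftInvOn g (semicircleCDF r) (Icc (-r) r) := fun t ht => hg_left t ht
  have hmid : Icc r (1 - r) ⊆ Ioo 0 1 := fun s hs => ⟨hr.trans_le hs.1, by linarith [hs.2]⟩
  have hf' {a b : ℝ} (ha : 0 ≤ a) (hb : b ≤ 1) (har : r ≤ a ∨ b ≤ r)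
      (har' : 1 - r ≤ a ∨ b ≤ 1 - r) : ∀ s ∈ Ioo a b, HasDerivAt f (f' s) s := fun s hs => by
    refine hderiv s ⟨⟨by linarith [hs.1], by linarith [hs.2]⟩, ?_⟩
    rintro (h | h : s = r ∨ s = 1 - r) <;> rcases har with h₁ | h₁ <;> rcases har' with h₂ | h₂ <;>
      linarith [hs.1, hs.2]
  have hL : EqOn f (fun s => g r / r ^ 2 * (s - 0) ^ 2) (Ioo 0 r) := fun s hs => by
    simp [hf1 s (Ioo_subset_Icc_self hs)]
  have hM : EqOn f g (Ioo r (1 - r)) := fun s hs => hf2 s (Ioo_subset_Ioc_self hs)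
  have hR : EqOn f (fun s => g (1 - r) / r ^ 2 * (s - 1) ^ 2) (Ioo (1 - r) 1) := fun s hs => by
    simp only [hf3 s (Ioo_subset_Icc_self hs)]; ring
  have hL' := hf' le_rfl (by linarith) (.inr le_rfl) (.inr hrr)
  have hM' := hf' hr.le (by linarith) (.inl le_rfl) (.inr le_rfl)
  have hR' := hf' (by linarith) le_rfl (.inl hrr) (.inl le_rfl)
  have hL_int := intervalIntegrable_sq_abs_deriv_of_eqOn_mul_sub_sq hL hL' hr.le
  have hM_int := intervalIntegrable_sq_abs_deriv_of_eqOn_inv_semicircleCDF hr hright hleft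
    hmid hM hM' hrr
  rw [← intervalIntegral.integral_add_adjacent_intervals (hL_int.trans hM_int)
      (intervalIntegrable_sq_abs_deriv_of_eqOn_mul_sub_sq hR hR' (by linarith)),
    ← intervalIntegral.integral_add_adjacent_intervals hL_int hM_int,
    integral_sq_abs_deriv_of_eqOn_mul_sub_sq hL hL' hr.le,
    integral_sq_abs_deriv_of_eqOn_mul_sub_sq hR hR' (by linarith)]
  have hg := mapsTo_Ioo_of_leftInvOn_semicircleCDF hr hright
  have hcapL := div_sq_sq_mul_pow_three_le hr (abs_lt.2 (hg (hmid ⟨le_rfl, hrr⟩))).le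
  have hcapR := div_sq_sq_mul_pow_three_le hr (abs_lt.2 (hg (hmid ⟨hrr, le_rfl⟩))).le
  have hM_le := integral_sq_abs_deriv_le_of_eqOn_inv_semicircleCDF hr hright hleft hmid hM hM'
    hrr
  nlinarith [mul_le_mul_of_nonneg_right hπr hr.le]

theorem perturbation_energy_bound (r : ℝ) (hr : 0 < r) (hr' : r ≤ 2 / Real.pi ^ 2)
    (g : ℝ → ℝ)
    (hg_mem : ∀ s ∈ Set.Icc (0 : ℝ) 1, g s ∈ Set.Icc (-r) r)
    (hg_right : ∀ s ∈ Set.Icc (0 : ℝ) 1,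
      (∫ t₁ in (-r)..(g s), (2 / (Real.pi * r ^ 2)) * Real.sqrt (r ^ 2 - t₁ ^ 2)) = s)
    (hg_left : ∀ t ∈ Set.Icc (-r) r,
      g (∫ t₁ in (-r)..t, (2 / (Real.pi * r ^ 2)) * Real.sqrt (r ^ 2 - t₁ ^ 2)) = t)
    (f f' : ℝ → ℝ)
    (hf1 : ∀ s ∈ Set.Icc (0 : ℝ) r, f s = (g r / r ^ 2) * s ^ 2)
    (hf2 : ∀ s ∈ Set.Ioc r (1 - r), f s = g s)
    (hf3 : ∀ s ∈ Set.Icc (1 - r) 1, f s = (g (1 - r) / r ^ 2) * (1 - s) ^ 2)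
    (hderiv : ∀ s ∈ Set.Icc (0 : ℝ) 1 \ {r, 1 - r}, HasDerivAt f (f' s) s) :
    (∫ s in (0 : ℝ)..1, |f' s| ^ 2) ≤ 5 * r :=
  perturbation_energy_bound_general r hr hr' g hg_right hg_left f f' hf1 hf2 hf3 hderiv
end
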